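/- For every p ∈ ℕ^ℕ, the problem id|{p} is a strong minimal cover of id|Succ(p) in the Weihrauch degrees. -/

import Mathlib

namespace WeihrauchPaper

/-- Baire space ℕ^ℕ. -/
abbrev Baire : Type := ℕ → ℕ

/-- Prepend a natural number to an element of Baire space: `(cons e q) 0 = e`, `(cons e q) (n+1) = q n`. -/
def cons (e : ℕ) (q : Baire) : Baire
  | 0 => e
  | n + 1 => q n

/-- Pairing of two elements of Baire space by interleaving. -/
def pair (p q : Baire) : Baire := fun n => if n % 2 = 0 then p (n / 2) else q (n / 2)

def left (x : Baire) : Baire := fun n => x (2 * n)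
def right (x : Baire) : Baire := fun n => x (2 * n + 1)

/-- The finite initial segment of `p` of length `k`. -/
def pref (p : Baire) (k : ℕ) : List ℕ := List.ofFn fun i : Fin k => p i

/-- Result of running the `e`-th partial computable function on the pair
(code of the length-`k` prefix of `p`, input `n`). -/
def query (e : ℕ) (p : Baire) (k n : ℕ) : Part ℕ :=
  Nat.Partrec.Code.eval (Denumerable.ofNat Nat.Partrec.Code e)
    (Nat.pair (Encodable.encode (pref p k)) n)

/-- `FEval e p q` : the `e`-th partial computable functional on Baire space, applied to `p`,
is defined and equals `q`.  The value at `n` is obtained from the least prefix length `k`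
on which the computation converges, which makes the functional single-valued. -/
def FEval (e : ℕ) (p q : Baire) : Prop :=
  ∀ n, ∃ k, query e p k n = Part.some (q n) ∧ ∀ k' < k, ¬ (query e p k' n).Dom

/-- Turing reducibility on Baire space: `q ≤_T p` iff `q = Φ_e(p)` for some `e`. -/
def TuringLE (q p : Baire) : Prop := ∃ e, FEval e p q

/-- Medvedev reducibility: `A ≤_M B` iff some partial computable functional is defined on all
of `B` and maps `B` into `A`. -/
def MedLE (A B : Set Baire) : Prop := ∃ e, ∀ q ∈ B, ∃ p, FEval e q p ∧ p ∈ A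

def MedEquiv (A B : Set Baire) : Prop := MedLE A B ∧ MedLE B A

def MedLT (A B : Set Baire) : Prop := MedLE A B ∧ ¬ MedLE B A

/-- The meet `P ∧ Q := 0⌢P ∪ 1⌢Q` in the Medvedev degrees. -/
def medMeet (P Q : Set Baire) : Set Baire := (cons 0 '' P) ∪ (cons 1 '' Q)

/-- `Succ p = { e⌢q : Φ_e(q) = p and q ≰_T p }`. -/
def Succ (p : Baire) : Set Baire :=
  {x | ∃ e q, x = cons e q ∧ FEval e q p ∧ ¬ TuringLE q p}

/-- A problem (partial multi-valued function on Baire space), represented as the map sending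
an instance to its (possibly empty) set of solutions. -/
abbrev Problem : Type := Baire → Set Baire

/-- The domain of a problem: the instances having at least one solution. -/
def dom (f : Problem) : Set Baire := {x | (f x).Nonempty}

/-- Weihrauch reducibility `f ≤_W g`. -/
def WLE (f g : Problem) : Prop :=
  ∃ eΦ eΨ, ∀ p ∈ dom f, ∃ p', FEval eΦ p p' ∧ p' ∈ dom g ∧
    ∀ q ∈ g p', ∃ r, FEval eΨ (pair p q) r ∧ r ∈ f p

def WEquiv (f g : Problem) : Prop := WLE f g ∧ WLE g f

def WLT (f g : Problem) : Prop := WLE f g ∧ ¬ WLE g f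

/-- The identity on Baire space, as a problem. -/
def idB : Problem := fun p => {p}

/-- The restriction of the identity to `X ⊆ ℕ^ℕ`, as a problem. -/
def idRestrict (X : Set Baire) : Problem := fun p => {q | p ∈ X ∧ q = p}

/-- The join `f ⊔ g`, with domain `{0}×dom f ∪ {1}×dom g` (coded via `cons`). -/
def join (f g : Problem) : Problem := fun x =>
  if x 0 = 0 then f (fun n => x (n + 1))
  else if x 0 = 1 then g (fun n => x (n + 1))
  else ∅

/-- The meet `f ⊓ g`, with domain `dom f × dom g` (coded via `pair`) and
`(f ⊓ g)(x,z) = {0}×f(x) ∪ {1}×g(z)` (coded via `cons`). -/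
def meet (f g : Problem) : Problem := fun x =>
  {y | left x ∈ dom f ∧ right x ∈ dom g ∧
    ((∃ z ∈ f (left x), y = cons 0 z) ∨ (∃ z ∈ g (right x), y = cons 1 z))}

/-- The constant sequence with value `n`. -/
def const (n : ℕ) : Baire := fun _ => n

/-- The characteristic function of `D ⊆ ℕ` as a problem: defined on the constant sequences,
with `χ_D(n)` the constantly-1 sequence if `n ∈ D` and the constantly-0 sequence otherwise. -/
def chi (D : Set ℕ) : Problem := fun x =>
  {y | ∃ n, x = const n ∧ ((n ∈ D ∧ y = const 1) ∨ (n ∉ D ∧ y = const 0))}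

/-- The set of non-computable elements of Baire space. -/
def NR : Set Baire := {q | ¬ Computable q}

/-- `f` is a minimal cover of `h` in the Weihrauch degrees. -/
def MinimalCover (f h : Problem) : Prop :=
  WLT h f ∧ ¬ ∃ g, WLT h g ∧ WLT g f

/-- `f` is a strong minimal cover of `h` in the Weihrauch degrees. -/
def StrongMinimalCover (f h : Problem) : Prop :=
  WLT h f ∧ ∀ g, WLT g f → WLE g h


open Nat.Partrec (Code)
open Nat.Partrec.Code Encodable Denumerable

lemma pref_length (p : Baire) (k : ℕ) : (pref p k).length = k := by
  simp [pref]

lemma pref_get? (p : Baire) (k n : ℕ) :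
    (pref p k)[n]? = if n < k then some (p n) else none := by
  simp [pref, List.getElem?_ofFn]

lemma pref_zero (p : Baire) : pref p 0 = [] := rfl

lemma pref_cons (e : ℕ) (q : Baire) (k : ℕ) :
    pref (cons e q) (k+1) = e :: pref q k := by
  simp [pref, List.ofFn_succ, cons]

/-- Generic construction of a code from a `Partrec₂` function of (prefix code, input). -/
lemma exists_code₂ (f : ℕ → ℕ →. ℕ) (hf : Partrec₂ f) :
    ∃ e : ℕ, ∀ p k n, query e p k n = f (encode (pref p k)) n := by
  have hF : Partrec (fun m : ℕ => f m.unpair.1 m.unpair.2) :=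
    hf.comp (Computable.fst.comp Computable.unpair) (Computable.snd.comp Computable.unpair)
  obtain ⟨c, hc⟩ := exists_code.1 (Partrec.nat_iff.1 hF)
  refine ⟨encode c, fun p k n => ?_⟩
  simp [query, Denumerable.ofNat_encode, hc]

lemma part_ofOption_none : (Part.ofOption (none : Option ℕ)).Dom → False := by
  simp [Part.ofOption]

/-- A code reading oracle position `h n`. -/
lemma exists_read (h : ℕ → ℕ) (hh : Computable h) :
    ∃ e, ∀ z : Baire, FEval e z (fun n => z (h n)) := by
  obtain ⟨e, he⟩ := exists_code₂
    (fun s n => Part.ofOption ((Denumerable.ofNat (List ℕ) s)[h n]?))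
    (Computable.ofOption <|
      (Primrec.list_getElem?.to_comp).comp
        ((Computable.ofNat (List ℕ)).comp Computable.fst)
        (hh.comp Computable.snd))
  refine ⟨e, fun z n => ?_⟩
  have key : ∀ k, query e z k n = Part.ofOption (if h n < k then some (z (h n)) else none) := by
    intro k
    rw [he, Denumerable.ofNat_encode, pref_get?]
  refine ⟨h n + 1, ?_, ?_⟩
  · rw [key]; simp
  · intro k' hk' hdom
    rw [key] at hdom
    rw [if_neg (show ¬ h n < k' by omega)] at hdom
    exact part_ofOption_none hdom

/-- Post-composition with an input-index remap: from a code `c` we get a code computing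
`n ↦ Φ_c(z)(h n)`. -/
lemma exists_remap (c : ℕ) (h : ℕ → ℕ) (hh : Computable h) :
    ∃ e, ∀ z y : Baire, FEval c z y → FEval e z (fun n => y (h n)) := by
  obtain ⟨e, he⟩ := exists_code₂
    (fun s n => eval (Denumerable.ofNat Code c) (Nat.pair s (h n)))
    (Nat.Partrec.Code.eval_part.comp
      (Computable.const (Denumerable.ofNat Code c))
      (Primrec₂.natPair.to_comp.comp Computable.fst (hh.comp Computable.snd)))
  refine ⟨e, fun z y hc n => ?_⟩
  have key : ∀ k, query e z k n = query c z k (h n) := by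
    intro k; rw [he]; rfl
  obtain ⟨k, hk1, hk2⟩ := hc (h n)
  exact ⟨k, by rw [key, hk1], fun k' hk' hd => hk2 k' hk' (by rwa [key] at hd)⟩

/-- The universal functional: `Φ_{e_U}(a⌢q) = Φ_a(q)`. -/
lemma exists_univ :
    ∃ eU, ∀ (a : ℕ) (q y : Baire), FEval a q y → FEval eU (cons a q) y := by
  obtain ⟨e, he⟩ := exists_code₂
    (fun s n => (Part.ofOption (Denumerable.ofNat (List ℕ) s).head?).bind
      fun a => eval (Denumerable.ofNat Code a)
        (Nat.pair (encode (Denumerable.ofNat (List ℕ) s).tail) n))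
    (by
      apply Partrec.bind
      · exact Computable.ofOption <|
          (Primrec.list_head?.to_comp).comp ((Computable.ofNat (List ℕ)).comp Computable.fst)
      · exact Nat.Partrec.Code.eval_part.comp
          ((Computable.ofNat Code).comp Computable.snd)
          (Primrec₂.natPair.to_comp.comp
            (Computable.encode.comp <| (Primrec.list_tail.to_comp).comp <|
              (Computable.ofNat (List ℕ)).comp <| Computable.fst.comp Computable.fst)
            (Computable.snd.comp Computable.fst)))
  refine ⟨e, fun a q y ha n => ?_⟩
  have key0 : query e (cons a q) 0 n = Part.ofOption none := by
    rw [he, pref_zero]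
    simp [Denumerable.ofNat_encode]
  have keyS : ∀ k, query e (cons a q) (k+1) n = query a q k n := by
    intro k
    rw [he, pref_cons]
    simp [Denumerable.ofNat_encode]
    rfl
  obtain ⟨k, hk1, hk2⟩ := ha n
  refine ⟨k+1, by rw [keyS, hk1], fun k' hk' hd => ?_⟩
  match k', hk' with
  | 0, _ => rw [key0] at hd; exact part_ofOption_none hd
  | (k''+1), hk' => rw [keyS] at hd; exact hk2 k'' (by omega) hd

lemma cons_succ (a : ℕ) (w : Baire) (m : ℕ) : cons a w (m+1) = w m := rfl

lemma pair_even (x y : Baire) (m : ℕ) : pair x y (2*m) = x m := by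
  simp [pair, Nat.mul_mod_right, Nat.mul_div_cancel_left _ (by norm_num : (0:ℕ) < 2)]

lemma pair_odd (x y : Baire) (m : ℕ) : pair x y (2*m+1) = y m := by
  have h1 : (2*m+1) % 2 = 1 := by omega
  have h2 : (2*m+1) / 2 = m := by omega
  simp [pair, h1, h2]

lemma left_pair (x y : Baire) : left (pair x y) = x := by
  funext n; exact pair_even x y n

lemma right_pair (x y : Baire) : right (pair x y) = y := by
  funext n; exact pair_odd x y n

/-- Forward functional: from a code `cΦ` computing `y` from `x`, a code computing
`cons a (pair x y)` from `x`. -/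
lemma exists_fwd (cΦ a : ℕ) :
    ∃ e, ∀ x y : Baire, FEval cΦ x y → FEval e x (cons a (pair x y)) := by
  obtain ⟨e, he⟩ := exists_code₂
    (fun s n =>
      bif n == 0 then Part.some a else
      bif n % 2 == 1 then Part.ofOption ((Denumerable.ofNat (List ℕ) s)[n/2]?) else
      eval (Denumerable.ofNat Code cΦ) (Nat.pair s (n/2 - 1)))
    (by
      apply Partrec.cond (Primrec.eq.comp Primrec.snd (Primrec.const 0)).decide.to_comp
      · exact Partrec.const' (Part.some a)
      · apply Partrec.cond
          (Primrec.eq.comp (Primrec.nat_mod.comp Primrec.snd (Primrec.const 2))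
            (Primrec.const 1)).decide.to_comp
        · exact Computable.ofOption <|
            (Primrec.list_getElem?.to_comp).comp
              ((Computable.ofNat (List ℕ)).comp Computable.fst)
              ((Primrec.nat_div.comp Primrec.snd (Primrec.const 2)).to_comp)
        · exact Nat.Partrec.Code.eval_part.comp
            (Computable.const (Denumerable.ofNat Code cΦ))
            (Primrec₂.natPair.to_comp.comp Computable.fst
              ((Primrec.nat_sub.comp
                (Primrec.nat_div.comp Primrec.snd (Primrec.const 2))
                (Primrec.const 1)).to_comp)))
  refine ⟨e, fun x y hc n => ?_⟩
  have key0 : ∀ k, query e x k 0 = Part.some a := by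
    intro k; rw [he]; rfl
  have keyOdd : ∀ k m, query e x k (2*m+1) =
      Part.ofOption ((pref x k)[m]?) := by
    intro k m
    rw [he]
    have h0 : ((2*m+1 : ℕ) == 0) = false := by simp
    have h1 : ((2*m+1) % 2 == 1) = true := by simp [Nat.mul_add_mod]
    have h2 : (2*m+1) / 2 = m := by omega
    rw [h0, h1, h2]; simp [Denumerable.ofNat_encode]
  have keyEven : ∀ k m, query e x k (2*m+2) = query cΦ x k m := by
    intro k m
    rw [he]
    have h0 : ((2*m+2 : ℕ) == 0) = false := by simp
    have h1 : ((2*m+2) % 2 == 1) = false := by simp [Nat.mul_add_mod]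
    have h2 : (2*m+2) / 2 - 1 = m := by omega
    rw [h0, h1, h2]; rfl
  rcases n with _ | n
  · exact ⟨0, by rw [key0]; rfl, by omega⟩
  rcases Nat.even_or_odd n with ⟨m, hm⟩ | ⟨m, hm⟩
  · -- n = 2m, so n+1 = 2m+1 : read x m
    have hn : n + 1 = 2*m+1 := by omega
    rw [hn]
    have hv : cons a (pair x y) (2*m+1) = x m := by
      rw [cons_succ, pair_even]
    refine ⟨m+1, ?_, ?_⟩
    · rw [keyOdd, pref_get?, if_pos (by omega), hv]; rfl
    · intro k' hk' hd
      rw [keyOdd, pref_get?, if_neg (by omega)] at hd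
      exact part_ofOption_none hd
  · -- n = 2m+1, so n+1 = 2m+2 : compute y m
    have hn : n + 1 = 2*m+2 := by omega
    rw [hn]
    have hv : cons a (pair x y) (2*m+2) = y m := by
      rw [cons_succ, pair_odd]
    obtain ⟨k, hk1, hk2⟩ := hc m
    refine ⟨k, by rw [keyEven, hk1, hv], fun k' h1 h2 => hk2 k' h1 (by rwa [keyEven] at h2)⟩

/-- Extract from a prefix of `pair x (cons a u)` the determined prefix of `u`. -/
def extractU (l : List ℕ) : List ℕ :=
  (List.range ((l.length - 2) / 2)).map fun i => l.getD (2*i+3) 0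

lemma extractU_pref (x u : Baire) (a : ℕ) (L : ℕ) :
    extractU (pref (pair x (cons a u)) L) = pref u ((L - 2) / 2) := by
  set z := pair x (cons a u) with hz
  apply List.ext_getElem?
  intro i
  rw [extractU, pref_length]
  rcases lt_or_ge i ((L - 2) / 2) with hi | hi
  · rw [List.getElem?_map, List.getElem?_range hi, pref_get?, if_pos hi]
    have hlt : 2*i+3 < L := by omega
    have : (pref z L).getD (2*i+3) 0 = z (2*i+3) := by
      rw [List.getD_eq_getElem?_getD, pref_get?, if_pos hlt]; rfl
    rw [Option.map_some, this]
    have : z (2*i+3) = u i := by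
      have h1 : 2*i+3 = 2*(i+1)+1 := by ring
      rw [hz, h1, pair_odd, cons_succ]
    rw [this]
  · rw [pref_get?, if_neg (by omega)]
    apply List.getElem?_eq_none
    simp [pref_length]
    omega

lemma extractU_primrec : Primrec extractU := by
  unfold extractU
  apply Primrec.list_map
  · exact Primrec.list_range.comp <|
      Primrec.nat_div.comp
        (Primrec.nat_sub.comp Primrec.list_length (Primrec.const 2))
        (Primrec.const 2)
  · exact (Primrec.list_getD 0).comp Primrec.fst <|
      Primrec.nat_add.comp
        (Primrec.nat_mul.comp (Primrec.const 2) Primrec.snd)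
        (Primrec.const 3)

/-- Backward functional: from a code `cΨ`, a code `e` with
`Φ_e(pair x (cons a u)) = Φ_{cΨ}(u)`. -/
lemma exists_bwd (cΨ : ℕ) :
    ∃ e, ∀ (x u r : Baire) (a : ℕ), FEval cΨ u r → FEval e (pair x (cons a u)) r := by
  obtain ⟨e, he⟩ := exists_code₂
    (fun s n => eval (Denumerable.ofNat Code cΨ)
      (Nat.pair (encode (extractU (Denumerable.ofNat (List ℕ) s))) n))
    (Nat.Partrec.Code.eval_part.comp
      (Computable.const (Denumerable.ofNat Code cΨ))
      (Primrec₂.natPair.to_comp.comp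
        (Computable.encode.comp <| extractU_primrec.to_comp.comp <|
          (Computable.ofNat (List ℕ)).comp Computable.fst)
        Computable.snd))
  refine ⟨e, fun x u r a hc n => ?_⟩
  classical
  set z := pair x (cons a u) with hz
  have key : ∀ L, query e z L n = query cΨ u ((L - 2) / 2) n := by
    intro L
    rw [he, Denumerable.ofNat_encode, extractU_pref]
    rfl
  obtain ⟨K, hK1, hK2⟩ := hc n
  have hdom : (query e z (2*K+3) n).Dom := by
    rw [key]
    have : (2*K+3-2)/2 = K := by omega
    rw [this, hK1]; trivial
  have hex : ∃ L, (query e z L n).Dom := ⟨2*K+3, hdom⟩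
  set L₀ := Nat.find hex with hL₀
  have hfind := Nat.find_spec hex
  have hle : L₀ ≤ 2*K+3 := Nat.find_le hdom
  have hMK : (L₀ - 2) / 2 = K := by
    have h1 : (L₀ - 2) / 2 ≤ K := by omega
    rcases lt_or_eq_of_le h1 with h2 | h2
    · exfalso
      rw [key] at hfind
      exact hK2 _ h2 hfind
    · exact h2
  refine ⟨L₀, ?_, fun L' hL' => Nat.find_min hex hL'⟩
  rw [key, hMK, hK1]

lemma dom_idRestrict (X : Set Baire) : dom (idRestrict X) = X := by
  ext x
  constructor
  · rintro ⟨y, hy, -⟩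
    exact hy
  · intro hx; exact ⟨x, hx, rfl⟩


/-- For every `p`, `id|{p}` is a strong minimal cover of `id|Succ(p)` in the Weihrauch degrees. -/
theorem idRestrict_singleton_smc (p : Baire) :
    StrongMinimalCover (idRestrict {p}) (idRestrict (Succ p)) := by
  obtain ⟨eU, hU⟩ := exists_univ
  obtain ⟨eL, hL⟩ := exists_read (fun n => 2*n)
    ((Primrec.nat_mul.comp (Primrec.const 2) Primrec.id).to_comp)
  obtain ⟨eR, hR⟩ := exists_read (fun n => 2*n+1)
    ((Primrec.nat_add.comp (Primrec.nat_mul.comp (Primrec.const 2) Primrec.id)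
      (Primrec.const 1)).to_comp)
  constructor
  · constructor
    · -- WLE (idRestrict (Succ p)) (idRestrict {p})
      refine ⟨eU, eL, ?_⟩
      intro x hx
      rw [dom_idRestrict] at hx
      obtain ⟨a, q, rfl, haq, hnT⟩ := hx
      refine ⟨p, hU a q p haq, ?_, ?_⟩
      · rw [dom_idRestrict]; rfl
      · intro q' hq'
        rw [hq'.2]
        refine ⟨cons a q, ?_, ⟨a, q, rfl, haq, hnT⟩, rfl⟩
        have h2 : (fun n => pair (cons a q) p (2*n)) = cons a q := by
          funext n; exact pair_even _ _ n
        have := hL (pair (cons a q) p)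
        rwa [h2] at this
    · -- ¬ WLE (idRestrict {p}) (idRestrict (Succ p))
      rintro ⟨eΦ, eΨ, h⟩
      obtain ⟨p', hp', hdom, -⟩ := h p (by rw [dom_idRestrict]; rfl)
      rw [dom_idRestrict] at hdom
      obtain ⟨a, q, rfl, haq, hnT⟩ := hdom
      obtain ⟨e', he'⟩ := exists_remap eΦ (fun n => n+1) (Primrec.succ.to_comp)
      apply hnT
      refine ⟨e', ?_⟩
      have := he' p (cons a q) hp'
      have h2 : (fun n => cons a q (n+1)) = q := by funext n; rfl
      rwa [h2] at this
  · -- strong minimality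
    intro g hg
    obtain ⟨⟨eΦ, eΨ, hred⟩, hnred⟩ := hg
    have hkey : ∀ x ∈ dom g, FEval eΦ x p ∧ ∃ r, FEval eΨ (pair x p) r ∧ r ∈ g x := by
      intro x hx
      obtain ⟨p', hΦ, hdom, hback⟩ := hred x hx
      rw [dom_idRestrict, Set.mem_singleton_iff] at hdom
      rw [hdom] at hΦ hback
      exact ⟨hΦ, hback p ⟨rfl, rfl⟩⟩
    by_cases hA : ∃ x₀ ∈ dom g, TuringLE x₀ p
    · exfalso; apply hnred
      obtain ⟨x₀, hx₀, e₀, he₀⟩ := hA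
      refine ⟨e₀, eL, ?_⟩
      intro pp hpp
      rw [dom_idRestrict, Set.mem_singleton_iff] at hpp
      rw [hpp]
      refine ⟨x₀, he₀, hx₀, ?_⟩
      intro q _
      refine ⟨p, ?_, rfl, rfl⟩
      have h2 : (fun n => pair p q (2*n)) = p := by
        funext n; exact pair_even _ _ n
      have := hL (pair p q)
      rwa [h2] at this
    · push_neg at hA
      obtain ⟨eF, hF⟩ := exists_fwd eΦ eR
      obtain ⟨eB, hB⟩ := exists_bwd eΨ
      refine ⟨eF, eB, ?_⟩
      intro x hx
      obtain ⟨hΦ, r, hr, hrg⟩ := hkey x hx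
      refine ⟨cons eR (pair x p), hF x p hΦ, ?_, ?_⟩
      · rw [dom_idRestrict]
        refine ⟨eR, pair x p, rfl, ?_, ?_⟩
        · have h2 : (fun n => (pair x p) (2*n+1)) = p := by
            funext n; exact pair_odd _ _ n
          have := hR (pair x p)
          rwa [h2] at this
        · rintro ⟨c, hc⟩
          obtain ⟨e', he'⟩ := exists_remap c (fun n => 2*n)
            ((Primrec.nat_mul.comp (Primrec.const 2) Primrec.id).to_comp)
          apply hA x hx
          refine ⟨e', ?_⟩
          have := he' p (pair x p) hc
          have h2 : (fun n => (pair x p) (2*n)) = x := by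
            funext n; exact pair_even _ _ n
          rwa [h2] at this
      · intro q hq
        obtain ⟨hS, rfl⟩ := hq
        exact ⟨r, hB x (pair x p) r eR hr, hrg⟩

end WeihrauchPaper
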